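/- Fix δ > 0 and x ∈ ℝ with |x| < δ. If r is uniformly distributed on [-δ/2, δ/2) and Q_{r,δ}(x) = δ⌊(x - r)/δ⌉ + r, then P[Q_{r,δ}(x) = r] = 1 - |x|/δ. -/

import Mathlib

/-! The grid point `Q_{r,δ}(x)` equals `r` exactly when `r` lies in the window
`(x - δ/2, x + δ/2]`, and this window meets `[-δ/2, δ/2)` in an interval of length `δ - |x|`. -/

open MeasureTheory Set

theorem mul_round_sub_div_eq_zero_iff {δ : ℝ} (hδ : 0 < δ) (x r : ℝ) :
    δ * ((round ((x - r) / δ) : ℤ) : ℝ) = 0 ↔ r ∈ Ioc (x - δ / 2) (x + δ / 2) := by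
  rw [mul_eq_zero, or_iff_right hδ.ne', Int.cast_eq_zero, round_eq_zero_iff, mem_Ico,
    le_div_iff₀ hδ, div_lt_iff₀ hδ, mem_Ioc]
  constructor <;> rintro ⟨h₁, h₂⟩ <;> constructor <;> linarith

theorem Real.volume_Ico_inter_Ioc (a b c d : ℝ) :
    volume (Ico a b ∩ Ioc c d) = ENNReal.ofReal (min b d - max a c) := by
  rw [measure_congr (Ico_ae_eq_Ioc.inter (ae_eq_refl (Ioc c d))), Ioc_inter_Ioc, Real.volume_Ioc]

theorem min_sub_max_eq_sub_abs (δ x : ℝ) :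
    min (δ / 2) (x + δ / 2) - max (-δ / 2) (x - δ / 2) = δ - |x| := by
  rcases le_total 0 x with hx | hx
  · rw [min_eq_left (by linarith), max_eq_right (by linarith), abs_of_nonneg hx]
    ring
  · rw [min_eq_right (by linarith), max_eq_left (by linarith), abs_of_nonpos hx]
    ring

/-- For `|x| < δ` and `r` uniform on `[-δ/2, δ/2)`, the probability that
`Q_{r,δ}(x) = δ⌊(x - r)/δ⌉ + r` equals `r` (i.e. `x` rounds to the zero lattice point of
the shifted grid) is `1 - |x|/δ`. -/
theorem prob_round_to_shift (δ x : ℝ) (hδ : 0 < δ) (hx : |x| < δ) :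
    (volume {r ∈ Set.Ico (-δ/2) (δ/2) |
        δ * ((round ((x - r) / δ) : ℤ) : ℝ) + r = r}).toReal / δ
      = 1 - |x| / δ := by
  have hset : {r ∈ Ico (-δ/2) (δ/2) | δ * ((round ((x - r) / δ) : ℤ) : ℝ) + r = r}
      = Ico (-δ/2) (δ/2) ∩ Ioc (x - δ/2) (x + δ/2) := by
    ext r
    simp only [mem_ofPred_eq, mem_inter_iff, add_eq_right, mul_round_sub_div_eq_zero_iff hδ]
  rw [hset, Real.volume_Ico_inter_Ioc, min_sub_max_eq_sub_abs,
    ENNReal.toReal_ofReal (by linarith), sub_div, div_self hδ.ne']
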